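/- Let f, g ∈ 𝒮_{1/2}(P). Then f and g are respectively the right and left KLS-functions associated with one and the same P-kernel if and only if ḡ f is symmetric (i.e., equals its own bar-involution). -/
import Mathlib


open Polynomial

namespace KLS

noncomputable section

set_option linter.unusedSectionVars false

variable {P : Type*} [PartialOrder P] [LocallyFiniteOrder P] [DecidableEq P]

/-- Convolution product in the incidence algebra `I(P)`. -/
def conv (f g : P → P → Polynomial ℤ) : P → P → Polynomial ℤ :=
  fun x z => ∑ y ∈ Finset.Icc x z, f x y * g y z

/-- The identity element `δ` of the incidence algebra. -/
def delta : P → P → Polynomial ℤ := fun x y => if x = y then 1 else 0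

/-- Pointwise sum in the incidence algebra. -/
def add (f g : P → P → Polynomial ℤ) : P → P → Polynomial ℤ :=
  fun x y => f x y + g x y

/-- The bar involution `f̄_{xy}(t) = t^{r_{xy}} f_{xy}(t⁻¹)`. -/
def bar (r : P → P → ℕ) (f : P → P → Polynomial ℤ) : P → P → Polynomial ℤ :=
  fun x y => (f x y).reflect (r x y)

/-- The hat involution `ĥ_{xy}(t) = (-1)^{r_{xy}} h_{xy}(t)`. -/
def hat (r : P → P → ℕ) (f : P → P → Polynomial ℤ) : P → P → Polynomial ℤ :=
  fun x y => (-1 : Polynomial ℤ) ^ (r x y) * f x y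

/-- `r` is a weak rank function: positive on strict pairs and additive. -/
def IsWeakRank (r : P → P → ℕ) : Prop :=
  (∀ x y : P, x < y → 0 < r x y) ∧
    ∀ x y z : P, x ≤ y → y ≤ z → r x y + r y z = r x z

/-- Membership in the subring `𝒮(P)`: `deg f_{xy} ≤ r_{xy}`. -/
def InS (r : P → P → ℕ) (f : P → P → Polynomial ℤ) : Prop :=
  ∀ x y : P, x ≤ y → (f x y).natDegree ≤ r x y

/-- Membership in `𝒮_{1/2}(P)`: `f_{xx} = 1` and `deg f_{xy} < r_{xy}/2`. -/
def InHalf (r : P → P → ℕ) (f : P → P → Polynomial ℤ) : Prop :=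
  (∀ x : P, f x x = 1) ∧ ∀ x y : P, x < y → 2 * (f x y).natDegree < r x y

/-- An incidence function vanishes off the order relation. -/
def Supported (f : P → P → Polynomial ℤ) : Prop :=
  ∀ x y : P, ¬ x ≤ y → f x y = 0

/-- `κ` is a `P`-kernel: `κ ∈ 𝒮(P)`, `κ_{xx} = 1` and `κ⁻¹ = κ̄`. -/
def IsKernel (r : P → P → ℕ) (κ : P → P → Polynomial ℤ) : Prop :=
  InS r κ ∧ (∀ x : P, κ x x = 1) ∧
    (∀ x z : P, x ≤ z → conv κ (bar r κ) x z = delta x z) ∧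
    (∀ x z : P, x ≤ z → conv (bar r κ) κ x z = delta x z)

/-! ### Auxiliary material -/

instance instDecLEofLF : DecidableRel ((· ≤ ·) : P → P → Prop) := fun x z =>
  decidable_of_iff (x ∈ Finset.Icc x z) (by simp)

lemma r_self {r : P → P → ℕ} (hr : IsWeakRank r) (x : P) : r x x = 0 := by
  have := hr.2 x x x le_rfl le_rfl; omega

lemma card_lt_right {x y z : P} (hxy : x ≤ y) (hyz : y < z) :
    (Finset.Icc x y).card < (Finset.Icc x z).card := by
  apply Finset.card_lt_card
  refine ⟨Finset.Icc_subset_Icc_right hyz.le, fun hsub => ?_⟩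
  have hz : z ∈ Finset.Icc x y := hsub (Finset.mem_Icc.mpr ⟨hxy.trans hyz.le, le_rfl⟩)
  exact absurd (Finset.mem_Icc.mp hz).2 hyz.not_ge

lemma card_lt_left {x y z : P} (hxy : x < y) (hyz : y ≤ z) :
    (Finset.Icc y z).card < (Finset.Icc x z).card := by
  apply Finset.card_lt_card
  refine ⟨Finset.Icc_subset_Icc_left hxy.le, fun hsub => ?_⟩
  have hx : x ∈ Finset.Icc y z := hsub (Finset.mem_Icc.mpr ⟨le_rfl, hxy.le.trans hyz⟩)
  exact absurd (Finset.mem_Icc.mp hx).1 hxy.not_ge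

/-- Fuel-based construction of the (left) inverse in the incidence algebra. -/
def invAux (g : P → P → Polynomial ℤ) : ℕ → P → P → Polynomial ℤ
  | 0, x, z => delta x z
  | n+1, x, z =>
      if x = z then 1
      else if x ≤ z then -∑ y ∈ Finset.Ico x z, invAux g n x y * g y z else 0

lemma invAux_self (g : P → P → Polynomial ℤ) (n : ℕ) (x : P) : invAux g n x x = 1 := by
  cases n <;> simp [invAux, delta]

lemma invAux_succ (g : P → P → Polynomial ℤ) :
    ∀ n, ∀ x z : P, x ≤ z → (Finset.Icc x z).card ≤ n + 1 →
      invAux g (n + 1) x z = invAux g n x z := by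
  intro n
  induction n with
  | zero =>
    intro x z hxz hc
    have hxez : x = z := by
      by_contra hne
      have hsub : ({x, z} : Finset P) ⊆ Finset.Icc x z := by
        intro a ha
        rcases Finset.mem_insert.mp ha with rfl | ha
        · exact Finset.mem_Icc.mpr ⟨le_rfl, hxz⟩
        · rw [Finset.mem_singleton] at ha; subst ha
          exact Finset.mem_Icc.mpr ⟨hxz, le_rfl⟩
      have h2 := Finset.card_le_card hsub
      rw [Finset.card_insert_of_notMem (by simp [hne]), Finset.card_singleton] at h2
      omega
    subst hxez
    rw [invAux_self, invAux_self]
  | succ n ih =>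
    intro x z hxz hc
    rcases hxz.lt_or_eq with hlt | rfl
    · show invAux g (n + 1 + 1) x z = invAux g (n + 1) x z
      conv_lhs => rw [invAux]
      conv_rhs => rw [invAux]
      rw [if_neg hlt.ne, if_neg hlt.ne, if_pos hxz, if_pos hxz]
      congr 1
      apply Finset.sum_congr rfl
      intro y hy
      rw [Finset.mem_Ico] at hy
      have hcy := card_lt_right hy.1 hy.2
      rw [ih x y hy.1 (by omega)]
    · rw [invAux_self, invAux_self]

/-- The inverse of `g` in the incidence algebra. -/
def inv (g : P → P → Polynomial ℤ) (x z : P) : Polynomial ℤ :=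
  invAux g (Finset.Icc x z).card x z

lemma invAux_eq_inv (g : P → P → Polynomial ℤ) :
    ∀ n, ∀ x z : P, x ≤ z → (Finset.Icc x z).card ≤ n + 1 →
      invAux g n x z = inv g x z := by
  intro n
  induction n with
  | zero =>
    intro x z hxz hc
    have hpos : 0 < (Finset.Icc x z).card :=
      Finset.card_pos.mpr ⟨x, Finset.mem_Icc.mpr ⟨le_rfl, hxz⟩⟩
    have h1 : (Finset.Icc x z).card = 1 := by omega
    rw [inv, h1, invAux_succ g 0 x z hxz (by omega)]
  | succ n ih =>
    intro x z hxz hc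
    rcases Nat.lt_or_ge (Finset.Icc x z).card (n + 2) with h | h
    · rw [invAux_succ g n x z hxz (by omega), ih x z hxz (by omega)]
    · have hcard : (Finset.Icc x z).card = n + 2 := by omega
      rw [inv, hcard, invAux_succ g (n + 1) x z hxz (by omega)]

lemma inv_self (g : P → P → Polynomial ℤ) (x : P) : inv g x x = 1 :=
  invAux_self g _ x

lemma inv_eq_sum (g : P → P → Polynomial ℤ) {x z : P} (hxz : x < z) :
    inv g x z = -∑ y ∈ Finset.Ico x z, inv g x y * g y z := by
  have hpos : 0 < (Finset.Icc x z).card :=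
    Finset.card_pos.mpr ⟨x, Finset.mem_Icc.mpr ⟨le_rfl, hxz.le⟩⟩
  obtain ⟨n, hn⟩ : ∃ n, (Finset.Icc x z).card = n + 1 :=
    ⟨(Finset.Icc x z).card - 1, by omega⟩
  rw [inv, hn]
  simp only [invAux, if_neg hxz.ne, if_pos hxz.le]
  congr 1
  apply Finset.sum_congr rfl
  intro y hy
  rw [Finset.mem_Ico] at hy
  have hcy := card_lt_right hy.1 hy.2
  rw [invAux_eq_inv g n x y hy.1 (by omega)]

/-! ### `conv` lemmas -/

lemma conv_congr {a a' b b' : P → P → Polynomial ℤ} {x z : P} (_hxz : x ≤ z)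
    (ha : ∀ y, x ≤ y → y ≤ z → a x y = a' x y)
    (hb : ∀ y, x ≤ y → y ≤ z → b y z = b' y z) :
    conv a b x z = conv a' b' x z := by
  apply Finset.sum_congr rfl
  intro y hy
  rw [Finset.mem_Icc] at hy
  rw [ha y hy.1 hy.2, hb y hy.1 hy.2]

lemma conv_assoc (a b c : P → P → Polynomial ℤ) (x z : P) :
    conv (conv a b) c x z = conv a (conv b c) x z := by
  unfold conv
  simp only [Finset.sum_mul, Finset.mul_sum]
  rw [Finset.sum_comm' (s := Finset.Icc x z) (t := fun y => Finset.Icc x y)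
      (t' := Finset.Icc x z) (s' := fun w => Finset.Icc w z)
      (f := fun y w => a x w * b w y * c y z)]
  · apply Finset.sum_congr rfl
    intro w _
    apply Finset.sum_congr rfl
    intro y _
    ring
  · intro y w
    simp only [Finset.mem_Icc]
    constructor
    · rintro ⟨⟨h1, h2⟩, h3, h4⟩
      exact ⟨⟨h4, h2⟩, h3, h4.trans h2⟩
    · rintro ⟨⟨h1, h2⟩, h3, h4⟩
      exact ⟨⟨h3.trans h1, h2⟩, h3, h1⟩

lemma conv_delta_left (a : P → P → Polynomial ℤ) {x z : P} (hxz : x ≤ z) :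
    conv delta a x z = a x z := by
  unfold conv
  rw [Finset.sum_eq_single_of_mem x (Finset.mem_Icc.mpr ⟨le_rfl, hxz⟩)]
  · simp [delta]
  · intro y _ hy
    simp [delta, Ne.symm hy]

lemma conv_delta_right (a : P → P → Polynomial ℤ) {x z : P} (hxz : x ≤ z) :
    conv a delta x z = a x z := by
  unfold conv
  rw [Finset.sum_eq_single_of_mem z (Finset.mem_Icc.mpr ⟨hxz, le_rfl⟩)]
  · simp [delta]
  · intro y _ hy
    simp [delta, hy]

lemma conv_inv_left (g : P → P → Polynomial ℤ) (hg : ∀ x : P, g x x = 1)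
    {x z : P} (hxz : x ≤ z) : conv (inv g) g x z = delta x z := by
  rcases hxz.lt_or_eq with hlt | rfl
  · unfold conv
    rw [← Finset.Ico_insert_right hxz, Finset.sum_insert Finset.right_notMem_Ico,
      hg z, mul_one, inv_eq_sum g hlt]
    simp [delta, hlt.ne]
  · simp [conv, delta, inv_self, hg]

lemma conv_cancel_zero (u h : P → P → Polynomial ℤ) (hu : ∀ x : P, u x x = 1)
    (hzero : ∀ x z : P, x ≤ z → conv u h x z = 0) :
    ∀ x z : P, x ≤ z → h x z = 0 := by
  have key : ∀ n, ∀ x z : P, x ≤ z → (Finset.Icc x z).card ≤ n → h x z = 0 := by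
    intro n
    induction n with
    | zero =>
      intro x z hxz hc
      have hpos : 0 < (Finset.Icc x z).card :=
        Finset.card_pos.mpr ⟨x, Finset.mem_Icc.mpr ⟨le_rfl, hxz⟩⟩
      omega
    | succ n ih =>
      intro x z hxz hc
      have h0 := hzero x z hxz
      unfold conv at h0
      rw [← Finset.Ioc_insert_left hxz, Finset.sum_insert Finset.left_notMem_Ioc,
        hu x, one_mul] at h0
      have hrest : ∀ y ∈ Finset.Ioc x z, u x y * h y z = 0 := by
        intro y hy
        rw [Finset.mem_Ioc] at hy
        have hcy := card_lt_left hy.1 hy.2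
        rw [ih y z hy.2 (by omega), mul_zero]
      rw [Finset.sum_eq_zero hrest, add_zero] at h0
      exact h0
  intro x z hxz
  exact key (Finset.Icc x z).card x z hxz le_rfl

lemma conv_inv_right (g : P → P → Polynomial ℤ) (hg : ∀ x : P, g x x = 1)
    {x z : P} (hxz : x ≤ z) : conv g (inv g) x z = delta x z := by
  have hzero : ∀ x z : P, x ≤ z →
      conv (inv g) (fun a b => conv g (inv g) a b - delta a b) x z = 0 := by
    intro x z hxz
    have expand : conv (inv g) (fun a b => conv g (inv g) a b - delta a b) x z
        = conv (inv g) (conv g (inv g)) x z - conv (inv g) delta x z := by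
      unfold conv
      rw [← Finset.sum_sub_distrib]
      apply Finset.sum_congr rfl
      intro y _
      ring
    rw [expand, ← conv_assoc, conv_delta_right _ hxz]
    have hstep : conv (conv (inv g) g) (inv g) x z = conv delta (inv g) x z :=
      conv_congr hxz (fun y h1 _ => conv_inv_left g hg h1) (fun _ _ _ => rfl)
    rw [hstep, conv_delta_left _ hxz, sub_self]
  have hz := conv_cancel_zero (inv g) _ (fun x => inv_self g x) hzero x z hxz
  exact sub_eq_zero.mp hz

/-! ### degree lemmas -/

lemma half_to_S {r : P → P → ℕ} {f : P → P → Polynomial ℤ} (hf : InHalf r f) :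
    InS r f := by
  intro x y hxy
  rcases hxy.lt_or_eq with hlt | rfl
  · have := hf.2 x y hlt; omega
  · rw [hf.1 x]; simp

lemma inv_deg_half {r : P → P → ℕ} (hr : IsWeakRank r) {g : P → P → Polynomial ℤ}
    (hg : InHalf r g) : ∀ x z : P, x < z → 2 * (inv g x z).natDegree < r x z := by
  have key : ∀ n, ∀ x z : P, x < z → (Finset.Icc x z).card ≤ n →
      2 * (inv g x z).natDegree < r x z := by
    intro n
    induction n with
    | zero =>
      intro x z hxz hc
      have hpos : 0 < (Finset.Icc x z).card :=
        Finset.card_pos.mpr ⟨x, Finset.mem_Icc.mpr ⟨le_rfl, hxz.le⟩⟩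
      omega
    | succ n ih =>
      intro x z hxz hc
      have hrpos := hr.1 x z hxz
      rw [inv_eq_sum g hxz, natDegree_neg]
      have bound : ∀ y ∈ Finset.Ico x z,
          (inv g x y * g y z).natDegree ≤ (r x z - 1) / 2 := by
        intro y hy
        rw [Finset.mem_Ico] at hy
        have hdy : 2 * (inv g x y * g y z).natDegree ≤ r x z - 1 := by
          have hm := Polynomial.natDegree_mul_le (p := inv g x y) (q := g y z)
          rcases hy.1.lt_or_eq with hlt | heq
          · have hcy := card_lt_right hy.1 hy.2
            have h1 := ih x y hlt (by omega)
            have h2 := hg.2 y z hy.2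
            have hadd := hr.2 x y z hlt.le hy.2.le
            omega
          · have hxlt : x < z := heq ▸ hy.2
            rw [← heq, inv_self, one_mul]
            have h2 := hg.2 x z hxlt
            omega
        exact (Nat.le_div_iff_mul_le (by omega)).mpr (by omega)
      have hsum := Polynomial.natDegree_sum_le_of_forall_le _ _ bound
      have h2 : (r x z - 1) / 2 * 2 ≤ r x z - 1 := Nat.div_mul_le_self _ _
      omega
  intro x z hxz
  exact key (Finset.Icc x z).card x z hxz le_rfl

lemma inv_InS {r : P → P → ℕ} (hr : IsWeakRank r) {g : P → P → Polynomial ℤ}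
    (hg : InHalf r g) : InS r (inv g) := by
  intro x y hxy
  rcases hxy.lt_or_eq with hlt | rfl
  · have := inv_deg_half hr hg x y hlt; omega
  · rw [inv_self]; simp

/-! ### `bar` lemmas -/

lemma natDegree_reflect_le {p : Polynomial ℤ} {N : ℕ} (h : p.natDegree ≤ N) :
    (p.reflect N).natDegree ≤ N := by
  apply Polynomial.natDegree_le_iff_coeff_eq_zero.mpr
  intro m hm
  rw [Polynomial.coeff_reflect, Polynomial.revAt_eq_self_of_lt hm]
  exact Polynomial.coeff_eq_zero_of_natDegree_lt (lt_of_le_of_lt h hm)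

lemma reflect_reflect (p : Polynomial ℤ) (N : ℕ) : (p.reflect N).reflect N = p := by
  ext i
  simp [Polynomial.coeff_reflect]

lemma reflect_one_zero : (1 : Polynomial ℤ).reflect 0 = 1 := by
  ext i
  rcases Nat.eq_zero_or_pos i with rfl | hi
  · simp
  · rw [Polynomial.coeff_reflect, Polynomial.revAt_eq_self_of_lt hi]

lemma reflect_sum (N : ℕ) (s : Finset P) (F : P → Polynomial ℤ) :
    (∑ y ∈ s, F y).reflect N = ∑ y ∈ s, (F y).reflect N := by
  induction s using Finset.cons_induction with
  | empty => simp
  | cons y s hy ih => rw [Finset.sum_cons, Finset.sum_cons, Polynomial.reflect_add, ih]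

lemma bar_conv {r : P → P → ℕ} (hr : IsWeakRank r) {a b : P → P → Polynomial ℤ}
    (ha : InS r a) (hb : InS r b) {x z : P} (hxz : x ≤ z) :
    bar r (conv a b) x z = conv (bar r a) (bar r b) x z := by
  unfold bar conv
  rw [reflect_sum]
  apply Finset.sum_congr rfl
  intro y hy
  rw [Finset.mem_Icc] at hy
  show (a x y * b y z).reflect (r x z) = _
  rw [← hr.2 x y z hy.1 hy.2]
  exact Polynomial.reflect_mul _ _ (ha x y hy.1) (hb y z hy.2)

lemma bar_delta {r : P → P → ℕ} (hr : IsWeakRank r) (x z : P) :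
    bar r delta x z = delta x z := by
  unfold bar delta
  split_ifs with h
  · subst h
    rw [r_self hr, reflect_one_zero]
  · exact Polynomial.reflect_zero

/-- `f, g ∈ 𝒮_{1/2}(P)` are the right and left KLS-functions of a single
`P`-kernel iff `ḡ f` is symmetric. -/
theorem stmt_10 {P : Type*} [PartialOrder P] [LocallyFiniteOrder P] [DecidableEq P]
    (r : P → P → ℕ) (hr : IsWeakRank r)
    (f g : P → P → Polynomial ℤ)
    (hfhalf : InHalf r f) (hfsupp : Supported f)
    (hghalf : InHalf r g) (hgsupp : Supported g) :
    (∃ κ : P → P → Polynomial ℤ, IsKernel r κ ∧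
        (∀ x z : P, x ≤ z → bar r f x z = conv κ f x z) ∧
        (∀ x z : P, x ≤ z → bar r g x z = conv g κ x z)) ↔
      (∀ x z : P, x ≤ z →
        bar r (conv (bar r g) f) x z = conv (bar r g) f x z) := by
  have hfS : InS r f := half_to_S hfhalf
  have hgS : InS r g := half_to_S hghalf
  have hbargS : InS r (bar r g) := fun x y h => natDegree_reflect_le (hgS x y h)
  constructor
  · rintro ⟨κ, ⟨hκS, hκdiag, hκ1, hκ2⟩, hf, hg'⟩ x z hxz
    calc bar r (conv (bar r g) f) x z
        = conv (bar r (bar r g)) (bar r f) x z := bar_conv hr hbargS hfS hxz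
      _ = conv g (bar r f) x z :=
          conv_congr hxz (fun y _ _ => reflect_reflect _ _) (fun _ _ _ => rfl)
      _ = conv g (conv κ f) x z :=
          conv_congr hxz (fun _ _ _ => rfl) (fun y _ h2 => hf y z h2)
      _ = conv (conv g κ) f x z := (conv_assoc _ _ _ _ _).symm
      _ = conv (bar r g) f x z :=
          conv_congr hxz (fun y h1 _ => (hg' x y h1).symm) (fun _ _ _ => rfl)
  · intro hsym
    have hgdiag := hghalf.1
    have hinvS : InS r (inv g) := inv_InS hr hghalf
    have hbarinvS : InS r (bar r (inv g)) := fun x y h => natDegree_reflect_le (hinvS x y h)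
    set κ : P → P → Polynomial ℤ := fun x z => conv (inv g) (bar r g) x z with hκdef
    -- basic facts
    have hL : ∀ x z : P, x ≤ z → conv (inv g) g x z = delta x z :=
      fun x z h => conv_inv_left g hgdiag h
    have hR : ∀ x z : P, x ≤ z → conv g (inv g) x z = delta x z :=
      fun x z h => conv_inv_right g hgdiag h
    have hbarκ : ∀ x z : P, x ≤ z → bar r κ x z = conv (bar r (inv g)) g x z := by
      intro x z hxz
      have h1 : bar r κ x z = bar r (conv (inv g) (bar r g)) x z := rfl
      rw [h1, bar_conv hr hinvS hbargS hxz]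
      exact conv_congr hxz (fun _ _ _ => rfl) (fun y _ _ => reflect_reflect _ _)
    have hbarL : ∀ x z : P, x ≤ z → conv (bar r (inv g)) (bar r g) x z = delta x z := by
      intro x z hxz
      rw [← bar_conv hr hinvS hgS hxz]
      show (conv (inv g) g x z).reflect (r x z) = delta x z
      rw [hL x z hxz]
      exact bar_delta hr x z
    have hbarR : ∀ x z : P, x ≤ z → conv (bar r g) (bar r (inv g)) x z = delta x z := by
      intro x z hxz
      rw [← bar_conv hr hgS hinvS hxz]
      show (conv g (inv g) x z).reflect (r x z) = delta x z
      rw [hR x z hxz]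
      exact bar_delta hr x z
    refine ⟨κ, ⟨?_, ?_, ?_, ?_⟩, ?_, ?_⟩
    · -- InS r κ
      intro x z hxz
      apply Polynomial.natDegree_sum_le_of_forall_le
      intro y hy
      rw [Finset.mem_Icc] at hy
      calc (inv g x y * bar r g y z).natDegree
          ≤ (inv g x y).natDegree + (bar r g y z).natDegree :=
            Polynomial.natDegree_mul_le
        _ ≤ r x y + r y z :=
            add_le_add (hinvS x y hy.1) (natDegree_reflect_le (hgS y z hy.2))
        _ = r x z := hr.2 x y z hy.1 hy.2
    · -- κ x x = 1
      intro x
      show conv (inv g) (bar r g) x x = 1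
      unfold conv
      rw [Finset.Icc_self, Finset.sum_singleton, inv_self, one_mul]
      show (g x x).reflect (r x x) = 1
      rw [hgdiag x, r_self hr, reflect_one_zero]
    · -- conv κ (bar r κ) = delta
      intro x z hxz
      have step1 : conv κ (bar r κ) x z = conv κ (conv (bar r (inv g)) g) x z :=
        conv_congr hxz (fun _ _ _ => rfl) (fun y h1 h2 => hbarκ y z h2)
      have step2 : conv κ (conv (bar r (inv g)) g) x z
          = conv (conv κ (bar r (inv g))) g x z := (conv_assoc _ _ _ _ _).symm
      have step3 : ∀ u v : P, u ≤ v → conv κ (bar r (inv g)) u v = inv g u v := by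
        intro u v huv
        have e1 : conv κ (bar r (inv g)) u v
            = conv (conv (inv g) (bar r g)) (bar r (inv g)) u v := rfl
        rw [e1, conv_assoc]
        have e2 : conv (inv g) (conv (bar r g) (bar r (inv g))) u v
            = conv (inv g) delta u v :=
          conv_congr huv (fun _ _ _ => rfl) (fun y h1 h2 => hbarR y v h2)
        rw [e2, conv_delta_right _ huv]
      have step4 : conv (conv κ (bar r (inv g))) g x z = conv (inv g) g x z :=
        conv_congr hxz (fun y h1 _ => step3 x y h1) (fun _ _ _ => rfl)
      rw [step1, step2, step4, hL x z hxz]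
    · -- conv (bar r κ) κ = delta
      intro x z hxz
      have step1 : conv (bar r κ) κ x z = conv (conv (bar r (inv g)) g) κ x z :=
        conv_congr hxz (fun y h1 _ => hbarκ x y h1) (fun _ _ _ => rfl)
      have step2 : ∀ u v : P, u ≤ v → conv g κ u v = bar r g u v := by
        intro u v huv
        have e1 : conv g κ u v = conv g (conv (inv g) (bar r g)) u v :=
          conv_congr huv (fun _ _ _ => rfl) (fun _ _ _ => rfl)
        rw [e1, ← conv_assoc]
        have e2 : conv (conv g (inv g)) (bar r g) u v = conv delta (bar r g) u v :=
          conv_congr huv (fun y h1 _ => hR u y h1) (fun _ _ _ => rfl)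
        rw [e2, conv_delta_left _ huv]
      have step3 : conv (conv (bar r (inv g)) g) κ x z
          = conv (bar r (inv g)) (conv g κ) x z := conv_assoc _ _ _ _ _
      have step4 : conv (bar r (inv g)) (conv g κ) x z
          = conv (bar r (inv g)) (bar r g) x z :=
        conv_congr hxz (fun _ _ _ => rfl) (fun y _ h2 => step2 y z h2)
      rw [step1, step3, step4, hbarL x z hxz]
    · -- bar r f = conv κ f
      intro x z hxz
      have hsym' : ∀ u v : P, u ≤ v → conv (bar r g) f u v = conv g (bar r f) u v := by
        intro u v huv
        have h1 := hsym u v huv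
        rw [bar_conv hr hbargS hfS huv] at h1
        rw [← h1]
        exact conv_congr huv (fun y _ _ => reflect_reflect _ _) (fun _ _ _ => rfl)
      have e1 : conv κ f x z = conv (conv (inv g) (bar r g)) f x z := rfl
      rw [e1, conv_assoc]
      have e2 : conv (inv g) (conv (bar r g) f) x z
          = conv (inv g) (conv g (bar r f)) x z :=
        conv_congr hxz (fun _ _ _ => rfl) (fun y _ h2 => hsym' y z h2)
      rw [e2, ← conv_assoc]
      have e3 : conv (conv (inv g) g) (bar r f) x z = conv delta (bar r f) x z :=
        conv_congr hxz (fun y h1 _ => hL x y h1) (fun _ _ _ => rfl)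
      rw [e3, conv_delta_left _ hxz]
    · -- bar r g = conv g κ
      intro x z hxz
      have e1 : conv g κ x z = conv g (conv (inv g) (bar r g)) x z := rfl
      rw [e1, ← conv_assoc]
      have e2 : conv (conv g (inv g)) (bar r g) x z = conv delta (bar r g) x z :=
        conv_congr hxz (fun y h1 _ => hR x y h1) (fun _ _ _ => rfl)
      rw [e2, conv_delta_left _ hxz]

end

end KLS
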